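/- Let N be an n-bit binary counter, let R be a valid configuration of N, and let u ∈ L_reset = ι_sync ((ι_{=0} | ι_dec) ι_rotr ι_off)* (ι_{=0} | ι_dec) ι_rotr ι_sync be such that |R·u| = |R|. Then under the configuration R·u the counter is synchronized (i.e., d₀ ∈ R·u) and its value is zero. -/

import Mathlib

/-- Partial transformations on `Q` (partial functions `Q → Q`), with
left-to-right composition: `q·(fg) = (q·f)·g`. -/
def PTrans (Q : Type*) : Type _ := Q → Option Q

/-- The image `R·f` of a configuration `R` under a partial transformation `f`. -/
def pApply {Q : Type*} (R : Set Q) (f : PTrans Q) : Set Q :=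
  {q' | ∃ q ∈ R, f q = some q'}

/-- The image `R·u` of a configuration under a word of partial transformations. -/
def wordApply {Q : Type*} (R : Set Q) (u : List (PTrans Q)) : Set Q :=
  u.foldl pApply R

/-! ### The `n`-bit binary counter
Cells: `(0, i) = dᵢ` (tape `S`), `(1, i) = cᵢ` (tape `T`), `(2, i) = c̄ᵢ`
(tape `T̄`). -/

variable (n : ℕ) [NeZero n]

/-- The cell `dᵢ` of the tape `S`. -/
def dCell (i : Fin n) : Fin 3 × Fin n := (0, i)

/-- The cell `cᵢ` of the tape `T`. -/
def cCell (i : Fin n) : Fin 3 × Fin n := (1, i)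

/-- The cell `c̄ᵢ` of the tape `T̄`. -/
def cbarCell (i : Fin n) : Fin 3 × Fin n := (2, i)

/-- `ι_rotl` : cyclic left rotation on all three tapes. -/
def rotl : PTrans (Fin 3 × Fin n) := fun x => some (x.1, x.2 + 1)

/-- `ι_rotr` : cyclic right rotation on all three tapes. -/
def rotr : PTrans (Fin 3 × Fin n) := fun x => some (x.1, x.2 - 1)

/-- `ι_{=0}` : undefined on `c₀`, identity on all other cells. -/
def eqz : PTrans (Fin 3 × Fin n) := fun x => if x = cCell n 0 then none else some x

/-- `ι_{=1}` : undefined on `c̄₀`, identity on all other cells. -/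
def eqo : PTrans (Fin 3 × Fin n) := fun x => if x = cbarCell n 0 then none else some x

/-- `ι_sync` : undefined on `d₁, …, d_{n-1}`, identity on all other cells. -/
def syncI : PTrans (Fin 3 × Fin n) :=
  fun x => if x.1 = 0 ∧ x.2 ≠ 0 then none else some x

/-- `ι_off` : undefined on `d₀`, identity on all other cells. -/
def offI : PTrans (Fin 3 × Fin n) := fun x => if x = dCell n 0 then none else some x

/-- `ι_inc` : maps `c̄₀` to `c₀`, undefined on `c₀`, identity elsewhere. -/
def incI : PTrans (Fin 3 × Fin n) :=
  fun x => if x = cbarCell n 0 then some (cCell n 0)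
    else if x = cCell n 0 then none else some x

/-- `ι_dec` : maps `c₀` to `c̄₀`, undefined on `c̄₀`, identity elsewhere. -/
def decI : PTrans (Fin 3 × Fin n) :=
  fun x => if x = cCell n 0 then some (cbarCell n 0)
    else if x = cbarCell n 0 then none else some x

/-- The instruction set of the `n`-bit binary counter. -/
def counterI : Set (PTrans (Fin 3 × Fin n)) :=
  {rotl n, rotr n, eqz n, eqo n, syncI n, offI n, incI n, decI n}

/-- A configuration is valid if it contains exactly one cell of the tape `S` and,
for each `i`, exactly one of `cᵢ`, `c̄ᵢ`. -/
def ValidConf (R : Set (Fin 3 × Fin n)) : Prop :=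
  (∃! i : Fin n, dCell n i ∈ R) ∧ ∀ i : Fin n, (cCell n i ∈ R ↔ cbarCell n i ∉ R)

open Classical in
/-- The value of the counter under a configuration `R`: `Σ_{i : cᵢ ∈ R} 2^i`. -/
noncomputable def counterValue (R : Set (Fin 3 × Fin n)) : ℕ :=
  ∑ i : Fin n, if cCell n i ∈ R then 2 ^ (i : ℕ) else 0

/-- Membership in the regular language
`L_reset = ι_sync ((ι_{=0} | ι_dec) ι_rotr ι_off)* (ι_{=0} | ι_dec) ι_rotr ι_sync`. -/
def memLreset (u : List (PTrans (Fin 3 × Fin n))) : Prop :=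
  ∃ (bs : List (PTrans (Fin 3 × Fin n))) (b : PTrans (Fin 3 × Fin n)),
    (∀ x ∈ bs, x = eqz n ∨ x = decI n) ∧ (b = eqz n ∨ b = decI n) ∧
    u = syncI n ::
      ((bs.map fun x => [x, rotr n, offI n]).flatten ++ [b, rotr n, syncI n])

/-- Membership in the regular language
`L_inc = ι_sync (ι_dec ι_rotr ι_off)* ι_inc (ι_off ι_rotr)* ι_sync`. -/
def memLinc (u : List (PTrans (Fin 3 × Fin n))) : Prop :=
  ∃ k m : ℕ,
    u = syncI n ::
      ((List.replicate k [decI n, rotr n, offI n]).flatten ++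
        incI n :: ((List.replicate m [offI n, rotr n]).flatten ++ [syncI n]))

/-- Membership in the regular language
`L_dec = ι_sync (ι_inc ι_rotr ι_off)* ι_dec (ι_off ι_rotr)* ι_sync`. -/
def memLdec (u : List (PTrans (Fin 3 × Fin n))) : Prop :=
  ∃ k m : ℕ,
    u = syncI n ::
      ((List.replicate k [incI n, rotr n, offI n]).flatten ++
        decI n :: ((List.replicate m [offI n, rotr n]).flatten ++ [syncI n]))

/-!
Every instruction is a partial function, so the image of a finite configuration under a word
has at most as many cells as the configuration; when the cardinality is preserved, every letter
must be defined on every cell it meets. For the reset word this pins down the run: the first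
`ι_sync` forces the head onto `d₀`, each `ι_off` keeps it away from `d₀`, and the final `ι_sync`
brings it back, so the head has gone at least once around the tape. Each round clears the bit in
`c₀` (`ι_{=0}` checks it is clear, `ι_dec` clears it) before rotating, so after a full turn every
bit is zero.
-/

section PartialTransformations

variable {Q : Type*}

def TotalOn : Set Q → List (PTrans Q) → Prop
  | _, [] => True
  | R, f :: u => (∀ q ∈ R, (f q).isSome) ∧ TotalOn (pApply R f) u

@[simp] lemma wordApply_nil (R : Set Q) : wordApply R [] = R := rfl

@[simp] lemma wordApply_cons (R : Set Q) (f : PTrans Q) (u : List (PTrans Q)) :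
    wordApply R (f :: u) = wordApply (pApply R f) u := rfl

lemma wordApply_append (R : Set Q) (u v : List (PTrans Q)) :
    wordApply R (u ++ v) = wordApply (wordApply R u) v :=
  List.foldl_append

lemma totalOn_append {R : Set Q} {u v : List (PTrans Q)} :
    TotalOn R (u ++ v) ↔ TotalOn R u ∧ TotalOn (wordApply R u) v := by
  induction u generalizing R with
  | nil => simp [TotalOn]
  | cons f u ih => simp [TotalOn, ih, and_assoc]

lemma pApply_eq_image {R : Set Q} {f : PTrans Q} (σ : Q → Q)
    (hf : ∀ q ∈ R, f q = some (σ q)) : pApply R f = σ '' R := by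
  ext q'
  constructor
  · rintro ⟨q, hq, hfq⟩
    exact ⟨q, hq, Option.some.inj ((hf q hq).symm.trans hfq)⟩
  · rintro ⟨q, hq, rfl⟩
    exact ⟨q, hq, hf q hq⟩

lemma pApply_eq_self {R : Set Q} {f : PTrans Q} (hf : ∀ q ∈ R, f q = some q) :
    pApply R f = R := by
  rw [pApply_eq_image id hf, Set.image_id]

lemma image_some_pApply (R : Set Q) (f : PTrans Q) :
    some '' pApply R f = f '' {q ∈ R | (f q).isSome} := by
  ext x
  constructor
  · rintro ⟨q', ⟨q, hq, hfq⟩, rfl⟩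
    exact ⟨q, ⟨hq, by simp [hfq]⟩, hfq⟩
  · rintro ⟨q, ⟨hq, hdef⟩, rfl⟩
    obtain ⟨q', hfq⟩ := Option.isSome_iff_exists.mp hdef
    exact ⟨q', ⟨q, hq, hfq⟩, hfq.symm⟩

lemma Set.Finite.pApply {R : Set Q} (hR : R.Finite) (f : PTrans Q) : (pApply R f).Finite :=
  show (some ⁻¹' (f '' R)).Finite from (hR.image f).preimage (Option.some_injective Q).injOn

lemma ncard_pApply_le {R : Set Q} (hR : R.Finite) (f : PTrans Q) :
    (pApply R f).ncard ≤ {q ∈ R | (f q).isSome}.ncard := by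
  rw [← Set.ncard_image_of_injective _ (Option.some_injective Q), image_some_pApply]
  exact Set.ncard_image_le (hR.subset (Set.sep_subset _ _))

lemma ncard_wordApply_le {R : Set Q} (hR : R.Finite) (u : List (PTrans Q)) :
    (wordApply R u).ncard ≤ R.ncard := by
  induction u generalizing R with
  | nil => rfl
  | cons f u ih =>
    calc (wordApply R (f :: u)).ncard ≤ (pApply R f).ncard := ih (hR.pApply f)
      _ ≤ {q ∈ R | (f q).isSome}.ncard := ncard_pApply_le hR f
      _ ≤ R.ncard := Set.ncard_le_ncard (Set.sep_subset _ _) hR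

lemma totalOn_of_ncard_wordApply_eq {R : Set Q} (hR : R.Finite) {u : List (PTrans Q)}
    (h : (wordApply R u).ncard = R.ncard) : TotalOn R u := by
  induction u generalizing R with
  | nil => trivial
  | cons f u ih =>
    rw [wordApply_cons] at h
    have hword := ncard_wordApply_le (hR.pApply f) u
    have hstep := ncard_pApply_le hR f
    have hdom := Set.ncard_le_ncard (Set.sep_subset R fun q => (f q).isSome) hR
    have hdom_eq : {q ∈ R | (f q).isSome} = R :=
      Set.eq_of_subset_of_ncard_le (Set.sep_subset _ _) (by omega) hR
    exact ⟨fun q hq => (hdom_eq.superset hq).2, ih (hR.pApply f) (by omega)⟩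

end PartialTransformations

open Fin.NatCast

section Counter

set_option linter.unusedSectionVars false

variable {n}

/-- Head on `dₚ`, and `c_{p+i}` set iff `i ∈ B`: bits are indexed relative to the head, so that a
rotation only moves `p`. -/
def counterConf (p : Fin n) (B : Set (Fin n)) : Set (Fin 3 × Fin n) :=
  {x | x.1 = 0 ∧ x.2 = p ∨ x.1 = 1 ∧ x.2 - p ∈ B ∨ x.1 = 2 ∧ x.2 - p ∉ B}

variable {p : Fin n} {B : Set (Fin n)}

lemma mem_counterConf {a : Fin 3} {i : Fin n} :
    (a, i) ∈ counterConf p B ↔ a = 0 ∧ i = p ∨ a = 1 ∧ i - p ∈ B ∨ a = 2 ∧ i - p ∉ B :=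
  Iff.rfl

lemma dCell_mem_counterConf {i : Fin n} : dCell n i ∈ counterConf p B ↔ i = p := by
  simp [dCell, mem_counterConf]

lemma cCell_mem_counterConf {i : Fin n} : cCell n i ∈ counterConf p B ↔ i - p ∈ B := by
  simp [cCell, mem_counterConf]

lemma cbarCell_mem_counterConf {i : Fin n} : cbarCell n i ∈ counterConf p B ↔ i - p ∉ B := by
  simp [cbarCell, mem_counterConf]

lemma ValidConf.exists_eq_counterConf {R : Set (Fin 3 × Fin n)} (hR : ValidConf n R) :
    ∃ p B, R = counterConf p B := by
  obtain ⟨⟨p, hp, hp_unique⟩, hc⟩ := hR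
  refine ⟨p, {i | cCell n (i + p) ∈ R}, ?_⟩
  ext ⟨a, i⟩
  have hci := hc i
  fin_cases a
  · have hd : (0, i) ∈ R ↔ i = p := ⟨hp_unique i, fun h => h ▸ hp⟩
    simpa [mem_counterConf] using hd
  · simp [mem_counterConf, cCell]
  · simp [mem_counterConf, cCell, cbarCell] at hci ⊢
    tauto

lemma pApply_rotr_counterConf : pApply (counterConf p B) (rotr n) = counterConf (p - 1) B := by
  rw [pApply_eq_image (f := rotr n) (fun x => (x.1, x.2 - 1)) fun _ _ => rfl,
    Set.image_eq_preimage_of_inverse (g := fun x => (x.1, x.2 + 1)) (by intro x; simp)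
      (by intro x; simp)]
  ext ⟨a, i⟩
  simp only [Set.mem_preimage, mem_counterConf, ← eq_sub_iff_add_eq, sub_sub_eq_add_sub]

lemma eq_zero_of_forall_isSome_syncI (h : ∀ q ∈ counterConf p B, (syncI n q).isSome) :
    p = 0 := by
  by_contra hp
  simpa [syncI, dCell, hp] using h (dCell n p) (dCell_mem_counterConf.mpr rfl)

lemma pApply_syncI_counterConf_zero : pApply (counterConf 0 B) (syncI n) = counterConf 0 B := by
  refine pApply_eq_self fun ⟨a, i⟩ hq => ?_
  rcases hq with ⟨rfl, rfl⟩ | ⟨rfl, -⟩ | ⟨rfl, -⟩ <;> simp [syncI]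

lemma pApply_offI_counterConf (h : ∀ q ∈ counterConf p B, (offI n q).isSome) :
    pApply (counterConf p B) (offI n) = counterConf p B := by
  have hp : p ≠ 0 := by
    rintro rfl
    simpa [offI] using h (dCell n 0) (dCell_mem_counterConf.mpr rfl)
  refine pApply_eq_self fun ⟨a, i⟩ hq => ?_
  rcases hq with ⟨rfl, rfl⟩ | ⟨rfl, -⟩ | ⟨rfl, -⟩ <;> simp [offI, dCell, hp]

lemma pApply_eqz_counterConf (h : ∀ q ∈ counterConf p B, (eqz n q).isSome) :
    pApply (counterConf p B) (eqz n) = counterConf p (B \ {-p}) := by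
  have hB : -p ∉ B := by
    intro hB
    simpa [eqz] using h (cCell n 0) (cCell_mem_counterConf.mpr (by simpa using hB))
  rw [Set.sdiff_singleton_eq_self hB]
  refine pApply_eq_self fun q hq => ?_
  simp only [eqz, ite_eq_right_iff, reduceCtorEq, imp_false]
  rintro rfl
  exact hB (by simpa using cCell_mem_counterConf.mp hq)

lemma pApply_decI_counterConf (h : ∀ q ∈ counterConf p B, (decI n q).isSome) :
    pApply (counterConf p B) (decI n) = counterConf p (B \ {-p}) := by
  have hB : -p ∈ B := by
    by_contra hB
    simpa [decI, cCell, cbarCell] using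
      h (cbarCell n 0) (cbarCell_mem_counterConf.mpr (by simpa using hB))
  rw [pApply_eq_image (Equiv.swap (cCell n 0) (cbarCell n 0)) ?_, Equiv.image_eq_preimage_symm,
    Equiv.symm_swap]
  · ext q
    by_cases hc : q = cCell n 0
    · subst hc
      simp [cCell_mem_counterConf, cbarCell_mem_counterConf, hB]
    by_cases hcbar : q = cbarCell n 0
    · subst hcbar
      simp [cCell_mem_counterConf, cbarCell_mem_counterConf, hB]
    rw [Set.mem_preimage, Equiv.swap_apply_of_ne_of_ne hc hcbar]
    obtain ⟨a, i⟩ := q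
    simp only [cCell, cbarCell, Prod.mk.injEq, not_and] at hc hcbar
    simp only [mem_counterConf, Set.mem_sdiff, Set.mem_singleton_iff, sub_eq_neg_self]
    grind
  · intro q hq
    by_cases hc : q = cCell n 0
    · simp [decI, hc, Equiv.swap_apply_left]
    have hcbar : q ≠ cbarCell n 0 := by
      rintro rfl
      exact (cbarCell_mem_counterConf.mp hq) (by simpa using hB)
    simp [decI, hc, hcbar, Equiv.swap_apply_of_ne_of_ne hc hcbar]

lemma pApply_counterConf_of_clear {x : PTrans (Fin 3 × Fin n)} (hx : x = eqz n ∨ x = decI n)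
    (h : ∀ q ∈ counterConf p B, (x q).isSome) :
    pApply (counterConf p B) x = counterConf p (B \ {-p}) := by
  rcases hx with rfl | rfl
  exacts [pApply_eqz_counterConf h, pApply_decI_counterConf h]

lemma natCast_image_Iio_eq_univ {k : ℕ} (hk : n ≤ k) :
    (Nat.cast '' Set.Iio k : Set (Fin n)) = Set.univ :=
  Set.eq_univ_of_forall fun i => ⟨i, lt_of_lt_of_le i.isLt hk, Fin.cast_val_eq_self i⟩

lemma pApply_clear_rotr_counterConf {x : PTrans (Fin 3 × Fin n)} (hx : x = eqz n ∨ x = decI n)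
    {k : ℕ} (h : ∀ q ∈ counterConf (-(k : Fin n)) (B \ Nat.cast '' Set.Iio k), (x q).isSome) :
    pApply (pApply (counterConf (-(k : Fin n)) (B \ Nat.cast '' Set.Iio k)) x) (rotr n) =
      counterConf (-((k + 1 : ℕ) : Fin n)) (B \ Nat.cast '' Set.Iio (k + 1)) := by
  rw [pApply_counterConf_of_clear hx h, pApply_rotr_counterConf, neg_neg, Nat.cast_succ, neg_add',
    Set.Iio_add_one_eq_Iic, ← Set.Iio_insert, Set.image_insert_eq, Set.sdiff_sdiff,
    Set.union_comm, Set.singleton_union]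

lemma wordApply_rounds_counterConf {bs : List (PTrans (Fin 3 × Fin n))}
    (hbs : ∀ x ∈ bs, x = eqz n ∨ x = decI n)
    (h : TotalOn (counterConf 0 B) (bs.map fun x => [x, rotr n, offI n]).flatten) :
    wordApply (counterConf 0 B) (bs.map fun x => [x, rotr n, offI n]).flatten =
      counterConf (-(bs.length : Fin n)) (B \ Nat.cast '' Set.Iio bs.length) := by
  induction bs using List.reverseRecOn with
  | nil => simp
  | append_singleton bs x ih =>
    simp only [List.map_append, List.map_singleton, List.flatten_append, List.flatten_singleton,
      totalOn_append, wordApply_append] at h ⊢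
    rw [ih (fun y hy => hbs y (List.mem_append_left _ hy)) h.1] at h ⊢
    obtain ⟨-, hx, -, hoff, -⟩ := h
    have hround := pApply_clear_rotr_counterConf (hbs x (by simp)) hx
    rw [hround] at hoff
    simp only [wordApply_cons, wordApply_nil]
    rw [hround, pApply_offI_counterConf hoff, List.length_append, List.length_singleton]

lemma wordApply_resetLoop_counterConf {bs : List (PTrans (Fin 3 × Fin n))}
    {b : PTrans (Fin 3 × Fin n)}
    (hbs : ∀ x ∈ bs, x = eqz n ∨ x = decI n) (hb : b = eqz n ∨ b = decI n)
    (h : TotalOn (counterConf 0 B)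
      ((bs.map fun x => [x, rotr n, offI n]).flatten ++ [b, rotr n, syncI n])) :
    wordApply (counterConf 0 B)
      ((bs.map fun x => [x, rotr n, offI n]).flatten ++ [b, rotr n, syncI n]) =
      counterConf 0 ∅ := by
  rw [totalOn_append] at h
  rw [wordApply_append]
  rw [wordApply_rounds_counterConf hbs h.1] at h ⊢
  obtain ⟨-, hb', -, hsync, -⟩ := h
  have hround := pApply_clear_rotr_counterConf hb hb'
  rw [hround] at hsync
  have hzero : ((bs.length + 1 : ℕ) : Fin n) = 0 :=
    neg_eq_zero.mp (eq_zero_of_forall_isSome_syncI hsync)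
  have hcleared := natCast_image_Iio_eq_univ (Nat.le_of_dvd (Nat.succ_pos _)
    (Fin.natCast_eq_zero.mp hzero))
  simp only [wordApply_cons, wordApply_nil]
  rw [hround, hzero, neg_zero, pApply_syncI_counterConf_zero, hcleared, Set.sdiff_univ]

lemma counterValue_counterConf_empty : counterValue n (counterConf p ∅) = 0 :=
  Finset.sum_eq_zero fun i _ => if_neg (by simp [cCell_mem_counterConf])

end Counter

/-- Applying a cardinality-preserving word of `L_reset` to a
valid configuration of an `n`-bit binary counter synchronizes the counter
(`d₀` belongs to the resulting configuration) and sets its value to zero. -/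
theorem counter_reset
    (R : Set (Fin 3 × Fin n)) (hR : ValidConf n R)
    (u : List (PTrans (Fin 3 × Fin n))) (hu : memLreset n u)
    (hcard : (wordApply R u).ncard = R.ncard) :
    dCell n 0 ∈ wordApply R u ∧ counterValue n (wordApply R u) = 0 := by
  have htot := totalOn_of_ncard_wordApply_eq R.toFinite hcard
  obtain ⟨bs, b, hbs, hb, rfl⟩ := hu
  obtain ⟨p, B, rfl⟩ := hR.exists_eq_counterConf
  obtain ⟨hsync, hloop⟩ := htot
  obtain rfl := eq_zero_of_forall_isSome_syncI hsync
  rw [pApply_syncI_counterConf_zero] at hloop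
  rw [wordApply_cons, pApply_syncI_counterConf_zero, wordApply_resetLoop_counterConf hbs hb hloop]
  exact ⟨dCell_mem_counterConf.mpr rfl, counterValue_counterConf_empty⟩
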